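/- A modal formula φ is satisfiable for K and complete up to its depth for K if and only if there exists a normal form ψ ∈ F_{P(φ)}^{md(φ)} such that φ ↔ ψ is valid for K. -/

import Mathlib

/-- Modal formulas in negation normal form, as in the paper:
φ ::= ⊥ | ⊤ | p | ¬p | φ∧φ | φ∨φ | □φ | ◇φ. -/
inductive Form : Type where
  | bot : Form
  | top : Form
  | pos : ℕ → Form
  | npos : ℕ → Form
  | and : Form → Form → Form
  | or : Form → Form → Form
  | box : Form → Form
  | dia : Form → Form
deriving DecidableEq

namespace Form

/-- Negation, defined as usual (by De Morgan dualities). -/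
def neg : Form → Form
  | bot => top
  | top => bot
  | pos p => npos p
  | npos p => pos p
  | and φ ψ => or φ.neg ψ.neg
  | or φ ψ => and φ.neg ψ.neg
  | box φ => dia φ.neg
  | dia φ => box φ.neg

/-- Implication φ → ψ, defined as usual. -/
def imp (φ ψ : Form) : Form := or φ.neg ψ

/-- Bi-implication φ ↔ ψ, defined as usual. -/
def biimp (φ ψ : Form) : Form := and (imp φ ψ) (imp ψ φ)

/-- P(φ): the set of propositional variables occurring in φ. -/
def vars : Form → Finset ℕ
  | bot => ∅
  | top => ∅
  | pos p => {p}
  | npos p => {p}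
  | and φ ψ => φ.vars ∪ ψ.vars
  | or φ ψ => φ.vars ∪ ψ.vars
  | box φ => φ.vars
  | dia φ => φ.vars

/-- Modal depth. -/
def md : Form → ℕ
  | bot => 0
  | top => 0
  | pos _ => 0
  | npos _ => 0
  | and φ ψ => max φ.md ψ.md
  | or φ ψ => max φ.md ψ.md
  | box φ => φ.md + 1
  | dia φ => φ.md + 1

/-- sub(φ): the set of subformulas of φ. -/
def subf : Form → Finset Form
  | bot => {bot}
  | top => {top}
  | pos p => {pos p}
  | npos p => {npos p}
  | and φ ψ => insert (and φ ψ) (φ.subf ∪ ψ.subf)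
  | or φ ψ => insert (or φ ψ) (φ.subf ∪ ψ.subf)
  | box φ => insert (box φ) φ.subf
  | dia φ => insert (dia φ) φ.subf

/-- s̄ub(φ) = sub(φ) ∪ {¬ψ : ψ ∈ sub(φ)}. -/
def subBar (φ : Form) : Finset Form := φ.subf ∪ φ.subf.image neg

/-- □^k φ : k nested boxes. -/
def boxIter : ℕ → Form → Form
  | 0, φ => φ
  | n + 1, φ => box (boxIter n φ)

def isDia : Form → Bool
  | dia _ => true
  | _ => false

def isBox : Form → Bool
  | box _ => true
  | _ => false

end Form

/-- Big conjunction over a finite set of formulas (⋀∅ = ⊤). -/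
noncomputable def bigAnd (s : Finset Form) : Form := s.toList.foldr Form.and Form.top

/-- Big disjunction over a finite set of formulas (⋁∅ = ⊥). -/
noncomputable def bigOr (s : Finset Form) : Form := s.toList.foldr Form.or Form.bot

/-- th(a) = ⋀ a. -/
noncomputable def th (a : Finset Form) : Form := bigAnd a

/-- A finite Kripke model: a nonempty finite set of states, an accessibility
relation and a valuation. -/
structure Model : Type 1 where
  W : Type
  nonempty : Nonempty W
  finite : Finite W
  R : W → W → Prop
  V : W → Set ℕ

/-- Satisfaction M,w ⊨ φ. -/
def Model.sat (M : Model) : M.W → Form → Prop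
  | _, .bot => False
  | _, .top => True
  | w, .pos p => p ∈ M.V w
  | w, .npos p => p ∉ M.V w
  | w, .and φ ψ => M.sat w φ ∧ M.sat w ψ
  | w, .or φ ψ => M.sat w φ ∨ M.sat w ψ
  | w, .box φ => ∀ v, M.R w v → M.sat v φ
  | w, .dia φ => ∃ v, M.R w v ∧ M.sat v φ

/-- The six base logics K, D, T, K4, KD4, S4. -/
inductive BaseLogic : Type where
  | K | D | T | K4 | KD4 | S4
deriving DecidableEq

/-- A logic: a base logic, possibly extended by axiom 5. -/
structure Logic : Type where
  base : BaseLogic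
  has5 : Bool
deriving DecidableEq

def Logic.K : Logic := ⟨.K, false⟩
def Logic.D : Logic := ⟨.D, false⟩
def Logic.T : Logic := ⟨.T, false⟩
def Logic.K4 : Logic := ⟨.K4, false⟩
def Logic.KD4 : Logic := ⟨.KD4, false⟩
def Logic.S4 : Logic := ⟨.S4, false⟩

/-- l + 5. -/
def BaseLogic.plus5 (b : BaseLogic) : Logic := ⟨b, true⟩

/-- M is a model for the logic l (frame conditions). -/
def Model.IsFor (M : Model) (l : Logic) : Prop :=
  (match l.base with
    | .K => True
    | .D => ∀ w, ∃ v, M.R w v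
    | .T => ∀ w, M.R w w
    | .K4 => ∀ a b c, M.R a b → M.R b c → M.R a c
    | .KD4 => (∀ w, ∃ v, M.R w v) ∧ (∀ a b c, M.R a b → M.R b c → M.R a c)
    | .S4 => (∀ w, M.R w w) ∧ (∀ a b c, M.R a b → M.R b c → M.R a c))
  ∧ (l.has5 = true → ∀ a b c, M.R a b → M.R a c → M.R b c)

/-- φ is satisfiable for l: satisfied at some state of some finite model for l. -/
def Satisfiable (l : Logic) (φ : Form) : Prop :=
  ∃ M : Model, M.IsFor l ∧ ∃ w : M.W, M.sat w φ

/-- φ is valid for l: satisfied at every state of every finite model for l. -/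
def Valid (l : Logic) (φ : Form) : Prop :=
  ∀ M : Model, M.IsFor l → ∀ w : M.W, M.sat w φ

/-- φ is complete for l: for every ψ ∈ L(P(φ)), φ→ψ or φ→¬ψ is valid for l. -/
def Complete (l : Logic) (φ : Form) : Prop :=
  ∀ ψ : Form, ψ.vars ⊆ φ.vars → (Valid l (φ.imp ψ) ∨ Valid l (φ.imp ψ.neg))

/-- Z is a bisimulation modulo P from M to M'. -/
def IsBisim (P : Set ℕ) (M M' : Model) (Z : M.W → M'.W → Prop) : Prop :=
  (∃ s s', Z s s') ∧
  ∀ s s', Z s s' →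
    (M.V s ∩ P = M'.V s' ∩ P) ∧
    (∀ t, M.R s t → ∃ t', M'.R s' t' ∧ Z t t') ∧
    (∀ t', M'.R s' t' → ∃ t, M.R s t ∧ Z t t')

/-- (M,a) ∼_P (M',a'). -/
def Bisimilar (P : Set ℕ) (M : Model) (a : M.W) (M' : Model) (a' : M'.W) : Prop :=
  ∃ Z, IsBisim P M M' Z ∧ Z a a'

/-- (M,a) ≡_P (M',a'): the two pointed models satisfy the same formulas of L(P). -/
def EquivP (P : Set ℕ) (M : Model) (a : M.W) (M' : Model) (a' : M'.W) : Prop :=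
  ∀ φ : Form, ↑φ.vars ⊆ P → (M.sat a φ ↔ M'.sat a' φ)

/-- (M,s) is flat (for base logic l, with axiom 5): the carrier is {s}∪W and
R = R1 ∪ R2 with R1 ⊆ {s}×W, R2 an equivalence relation on W, and s ∈ W if
l ∈ {T,S4}. -/
def Flat (l : BaseLogic) (M : Model) (s : M.W) : Prop :=
  ∃ W : Set M.W, (∀ w, w = s ∨ w ∈ W) ∧
    ∃ R1 R2 : M.W → M.W → Prop,
      (∀ x y, M.R x y ↔ (R1 x y ∨ R2 x y)) ∧
      (∀ x y, R1 x y → x = s ∧ y ∈ W) ∧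
      (∀ x y, R2 x y → x ∈ W ∧ y ∈ W) ∧
      (∀ x ∈ W, R2 x x) ∧
      (∀ x y, R2 x y → R2 y x) ∧
      (∀ x y z, R2 x y → R2 y z → R2 x z) ∧
      ((l = .T ∨ l = .S4) → s ∈ W)

/-- A maximal state for l with respect to φ: a maximally l-consistent subset
of s̄ub(φ). -/
def MaxState (l : Logic) (φ : Form) (a : Finset Form) : Prop :=
  a ⊆ φ.subBar ∧ Satisfiable l (th a) ∧ ∀ ψ ∈ φ.subf, ψ ∈ a ∨ ψ.neg ∈ a

/-- D(x) = {◇ψ : ◇ψ ∈ x}. -/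
def DSet (x : Finset Form) : Finset Form := x.filter (fun ψ => ψ.isDia = true)

/-- B(x) = {□ψ : □ψ ∈ x}. -/
def BSet (x : Finset Form) : Finset Form := x.filter (fun ψ => ψ.isBox = true)

/-- A view: a parent-state and a finite set of children-states. -/
structure View : Type where
  parent : Finset Form
  children : Finset (Finset Form)

/-- The view is with respect to φ: all its states are subsets of s̄ub(φ). -/
def View.WF (φ : Form) (S : View) : Prop :=
  S.parent ⊆ φ.subBar ∧ ∀ c ∈ S.children, c ⊆ φ.subBar

/-- A set of formulas is l-closed. -/
def LClosed (l : Logic) (P : Finset ℕ) (s : Finset Form) : Prop :=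
  (∀ φ1 φ2 : Form, Form.and φ1 φ2 ∈ s → φ1 ∈ s ∧ φ2 ∈ s) ∧
  (∀ φ1 φ2 : Form, Form.or φ1 φ2 ∈ s → φ1 ∈ s ∨ φ2 ∈ s) ∧
  ((l.base = .T ∨ l.base = .S4) → ∀ ψ : Form, Form.box ψ ∈ s → ψ ∈ s) ∧
  (∀ p ∈ P, Form.pos p ∈ s ∨ Form.npos p ∈ s)

/-- The view S is l-complete. -/
def ViewLComplete (l : Logic) (P : Finset ℕ) (S : View) : Prop :=
  LClosed l P S.parent ∧
  (∀ c ∈ S.children, LClosed l P c) ∧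
  (∀ ψ : Form, Form.dia ψ ∈ S.parent → ∃ c ∈ S.children, ψ ∈ c) ∧
  (∀ ψ : Form, Form.box ψ ∈ S.parent → ∀ c ∈ S.children, ψ ∈ c) ∧
  ((l.base = .K4 ∨ l.base = .KD4 ∨ l.base = .S4) →
    ∀ ψ : Form, Form.box ψ ∈ S.parent → ∀ c ∈ S.children, Form.box ψ ∈ c) ∧
  (l.base = .KD4 → S.children.Nonempty)

/-- The view S is consistent for l: every one of its states is consistent. -/
def ViewConsistent (l : Logic) (S : View) : Prop :=
  Satisfiable l (th S.parent) ∧ ∀ c ∈ S.children, Satisfiable l (th c)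

/-- d = max{md(th(c')) : c' ∈ C(S)}. -/
noncomputable def childDepth (S : View) : ℕ := S.children.sup (fun c => (th c).md)

/-- A K-maximal child-state: a maximally K-consistent subset of s̄ub_d(φ). -/
def KMaxChild (φ : Form) (d : ℕ) (c : Finset Form) : Prop :=
  c ⊆ φ.subBar.filter (fun ψ => ψ.md ≤ d) ∧
  Satisfiable Logic.K (th c) ∧
  ∀ ψ ∈ φ.subf, ψ.md ≤ d → (ψ ∈ c ∨ ψ.neg ∈ c)

/-- S' completes S (for logic l, with respect to φ). -/
def ViewCompletes (l : Logic) (φ : Form) (S' S : View) : Prop :=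
  ViewLComplete l φ.vars S' ∧
  S.parent ⊆ S'.parent ∧
  (∀ a ∈ S.children, ∃ a' ∈ S'.children, a ⊆ a') ∧
  (l.base = .K → ∀ a' ∈ S'.children, KMaxChild φ (childDepth S') a') ∧
  (l.base ≠ .K → ∀ a' ∈ S'.children, MaxState l φ a')

/-- The depth-0 normal form ⋀_{p∈S} p ∧ ⋀_{p∈P∖S} ¬p. -/
noncomputable def nf0 (P S : Finset ℕ) : Form :=
  Form.and (bigAnd (S.image Form.pos)) (bigAnd ((P \ S).image Form.npos))

/-- Fine's normal forms F_P^d. -/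
noncomputable def NF (P : Finset ℕ) : ℕ → Set Form
  | 0 => { χ | ∃ S ⊆ P, χ = nf0 P S }
  | d + 1 => { χ | ∃ S : Finset Form, ↑S ⊆ NF P d ∧ ∃ S0 ⊆ P,
      χ = Form.and (nf0 P S0)
            (Form.and (bigAnd (S.image Form.dia)) (Form.box (bigOr S))) }

/-- φ is complete up to its depth for l. -/
def CompleteUpToDepth (l : Logic) (φ : Form) : Prop :=
  ∀ ψ : Form, ψ.vars ⊆ φ.vars → ψ.md ≤ φ.md →
    (Valid l (φ.imp ψ) ∨ Valid l (φ.imp ψ.neg))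


/-! Every finite pointed model satisfies a normal form of each depth over `P`, built recursively
from the atoms true at the state and the normal forms of its successors. Two states
satisfying the same normal form of depth `d` satisfy the same formulas of `L(P)` of depth `≤ d`
(the normal form forces atom agreement and lets successors be matched back and forth), and every
normal form is satisfiable in the model whose states are its own subformulas. Hence a satisfiable
formula that is complete up to its depth is equivalent to the normal form of any of its models,
and a formula equivalent to a normal form inherits its satisfiability and completeness. -/

namespace Form

lemma sat_neg (M : Model) (φ : Form) (w : M.W) : M.sat w φ.neg ↔ ¬ M.sat w φ := by
  induction φ generalizing w with
  | and a b iha ihb => simp only [neg, Model.sat, iha, ihb]; tauto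
  | or a b iha ihb => simp only [neg, Model.sat, iha, ihb]; tauto
  | box a ih => simp [neg, Model.sat, ih]
  | dia a ih => simp [neg, Model.sat, ih]
  | _ => simp [neg, Model.sat]

lemma sat_imp (M : Model) (w : M.W) (φ ψ : Form) :
    M.sat w (φ.imp ψ) ↔ (M.sat w φ → M.sat w ψ) := by
  simp only [imp, Model.sat, sat_neg]
  tauto

/-- `⊤` counts as the empty conjunction. -/
def conjuncts : Form → Set Form
  | top => ∅
  | and φ ψ => φ.conjuncts ∪ ψ.conjuncts
  | φ => {φ}

lemma mem_subf_self (φ : Form) : φ ∈ φ.subf := by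
  cases φ <;> simp [subf]

lemma subf_subset_of_mem {φ ψ : Form} (h : φ ∈ ψ.subf) : φ.subf ⊆ ψ.subf := by
  induction ψ with
  | and a b iha ihb | or a b iha ihb =>
    simp only [subf, Finset.mem_insert, Finset.mem_union] at h
    rcases h with rfl | h | h
    · exact subset_rfl
    · exact (iha h).trans (Finset.subset_union_left.trans (Finset.subset_insert _ _))
    · exact (ihb h).trans (Finset.subset_union_right.trans (Finset.subset_insert _ _))
  | box a ih | dia a ih =>
    simp only [subf, Finset.mem_insert] at h
    rcases h with rfl | h
    · exact subset_rfl
    · exact (ih h).trans (Finset.subset_insert _ _)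
  | _ => simp_all [subf]

lemma conjuncts_subset_subf (φ : Form) : φ.conjuncts ⊆ φ.subf := by
  induction φ with
  | and a b iha ihb =>
    simp only [conjuncts, subf, Finset.coe_insert, Finset.coe_union]
    exact (Set.union_subset_union iha ihb).trans (Set.subset_insert _ _)
  | top => simp [conjuncts]
  | _ => simp [conjuncts, subf]

end Form

open Form

lemma Model.isFor_K (M : Model) : M.IsFor Logic.K :=
  ⟨trivial, fun h => by simp [Logic.K] at h⟩

lemma valid_imp_iff {l : Logic} {φ ψ : Form} :
    Valid l (φ.imp ψ) ↔ ∀ M : Model, M.IsFor l → ∀ w, M.sat w φ → M.sat w ψ := by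
  simp only [Valid, sat_imp]

lemma valid_biimp_iff {l : Logic} {φ ψ : Form} :
    Valid l (φ.biimp ψ) ↔ ∀ M : Model, M.IsFor l → ∀ w, (M.sat w φ ↔ M.sat w ψ) := by
  simp only [Valid, biimp, Model.sat, sat_imp, iff_def]

section BigConnectives

variable {s : Finset Form} {P : Finset ℕ} {n : ℕ}

lemma vars_bigAnd_subset (hs : ∀ φ ∈ s, φ.vars ⊆ P) : (bigAnd s).vars ⊆ P := by
  rw [bigAnd]
  simp_rw [← Finset.mem_toList] at hs
  generalize s.toList = l at hs
  induction l <;> simp_all [vars, Finset.union_subset_iff]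

lemma vars_bigOr_subset (hs : ∀ φ ∈ s, φ.vars ⊆ P) : (bigOr s).vars ⊆ P := by
  rw [bigOr]
  simp_rw [← Finset.mem_toList] at hs
  generalize s.toList = l at hs
  induction l <;> simp_all [vars, Finset.union_subset_iff]

lemma md_bigAnd_le (hs : ∀ φ ∈ s, φ.md ≤ n) : (bigAnd s).md ≤ n := by
  rw [bigAnd]
  simp_rw [← Finset.mem_toList] at hs
  generalize s.toList = l at hs
  induction l <;> simp_all [md]

lemma md_bigOr_le (hs : ∀ φ ∈ s, φ.md ≤ n) : (bigOr s).md ≤ n := by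
  rw [bigOr]
  simp_rw [← Finset.mem_toList] at hs
  generalize s.toList = l at hs
  induction l <;> simp_all [md]

lemma sat_bigAnd (M : Model) (w : M.W) : M.sat w (bigAnd s) ↔ ∀ φ ∈ s, M.sat w φ := by
  rw [bigAnd]
  simp_rw [← Finset.mem_toList]
  induction s.toList <;> simp_all [Model.sat]

lemma sat_bigOr (M : Model) (w : M.W) : M.sat w (bigOr s) ↔ ∃ φ ∈ s, M.sat w φ := by
  rw [bigOr]
  simp_rw [← Finset.mem_toList]
  induction s.toList <;> simp_all [Model.sat]

lemma conjuncts_bigAnd : (bigAnd s).conjuncts = ⋃ φ ∈ s, φ.conjuncts := by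
  rw [bigAnd]
  simp_rw [← Finset.mem_toList]
  induction s.toList <;> simp_all [conjuncts]

end BigConnectives

section NormalForms

variable {P S0 : Finset ℕ} {d : ℕ}

noncomputable def nfSucc (P S0 : Finset ℕ) (S : Finset Form) : Form :=
  (nf0 P S0).and ((bigAnd (S.image dia)).and (bigOr S).box)

lemma mem_NF_zero {χ : Form} : χ ∈ NF P 0 ↔ ∃ S0 ⊆ P, χ = nf0 P S0 := Iff.rfl

lemma mem_NF_succ {χ : Form} :
    χ ∈ NF P (d + 1) ↔
      ∃ S : Finset Form, ↑S ⊆ NF P d ∧ ∃ S0 ⊆ P, χ = nfSucc P S0 S :=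
  Iff.rfl

lemma sat_nf0_iff (M : Model) (w : M.W) (hS0 : S0 ⊆ P) :
    M.sat w (nf0 P S0) ↔ ∀ p ∈ P, (p ∈ M.V w ↔ p ∈ S0) := by
  simp only [nf0, Model.sat, sat_bigAnd, Finset.forall_mem_image, Finset.mem_sdiff]
  constructor
  · rintro ⟨hpos, hneg⟩ p hp
    exact ⟨fun hw => by_contra fun h => hneg ⟨hp, h⟩ hw, fun h => hpos h⟩
  · intro h
    exact ⟨fun p hp => (h p (hS0 hp)).2 hp, fun p hp => mt (h p hp.1).1 hp.2⟩

lemma sat_nfSucc_iff (M : Model) (w : M.W) (S : Finset Form) :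
    M.sat w (nfSucc P S0 S) ↔
      M.sat w (nf0 P S0) ∧ (∀ φ ∈ S, ∃ v, M.R w v ∧ M.sat v φ) ∧
        ∀ v, M.R w v → ∃ φ ∈ S, M.sat v φ := by
  simp only [nfSucc, Model.sat, sat_bigAnd, sat_bigOr, Finset.forall_mem_image]

lemma exists_nf0_of_mem_NF {ψ : Form} (hψ : ψ ∈ NF P d) :
    ∃ S0 ⊆ P, ∀ (M : Model) (w : M.W), M.sat w ψ → M.sat w (nf0 P S0) := by
  cases d with
  | zero => obtain ⟨S0, hS0, rfl⟩ := mem_NF_zero.1 hψ; exact ⟨S0, hS0, fun _ _ => id⟩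
  | succ d =>
    obtain ⟨S, -, S0, hS0, rfl⟩ := mem_NF_succ.1 hψ
    exact ⟨S0, hS0, fun _ _ hw => hw.1⟩

lemma vars_nf0_subset (hS0 : S0 ⊆ P) : (nf0 P S0).vars ⊆ P :=
  Finset.union_subset (vars_bigAnd_subset (by simpa [vars, Finset.subset_iff] using hS0))
    (vars_bigAnd_subset <| Finset.forall_mem_image.2 fun p hp => by
      simp [vars, (Finset.mem_sdiff.1 hp).1])

lemma md_nf0 : (nf0 P S0).md = 0 :=
  Nat.le_zero.1 <| max_le (md_bigAnd_le <| Finset.forall_mem_image.2 fun _ _ => le_rfl)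
    (md_bigAnd_le <| Finset.forall_mem_image.2 fun _ _ => le_rfl)

lemma vars_subset_of_mem_NF {ψ : Form} (hψ : ψ ∈ NF P d) : ψ.vars ⊆ P := by
  induction d generalizing ψ with
  | zero => obtain ⟨S0, hS0, rfl⟩ := mem_NF_zero.1 hψ; exact vars_nf0_subset hS0
  | succ d ih =>
    obtain ⟨S, hS, S0, hS0, rfl⟩ := mem_NF_succ.1 hψ
    exact Finset.union_subset (vars_nf0_subset hS0) <| Finset.union_subset
      (vars_bigAnd_subset (by simpa [vars] using fun χ hχ => ih (hS hχ)))
      (vars_bigOr_subset fun χ hχ => ih (hS hχ))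

lemma md_le_of_mem_NF {ψ : Form} (hψ : ψ ∈ NF P d) : ψ.md ≤ d := by
  induction d generalizing ψ with
  | zero => obtain ⟨S0, -, rfl⟩ := mem_NF_zero.1 hψ; exact md_nf0.le
  | succ d ih =>
    obtain ⟨S, hS, S0, -, rfl⟩ := mem_NF_succ.1 hψ
    refine max_le (by simp [md_nf0]) (max_le (md_bigAnd_le ?_) ?_)
    · simpa [md] using fun χ hχ => ih (hS hχ)
    · exact Nat.succ_le_succ (md_bigOr_le fun χ hχ => ih (hS hχ))

end NormalForms

def ShareNF (P : Finset ℕ) (d : ℕ) (M : Model) (w : M.W) (M' : Model) (w' : M'.W) : Prop :=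
  ∃ ψ ∈ NF P d, M.sat w ψ ∧ M'.sat w' ψ

namespace ShareNF

variable {P : Finset ℕ} {d : ℕ} {M M' : Model} {w : M.W} {w' : M'.W}

lemma symm (h : ShareNF P d M w M' w') : ShareNF P d M' w' M w :=
  let ⟨ψ, hψ, hw, hw'⟩ := h; ⟨ψ, hψ, hw', hw⟩

lemma mem_V_iff (h : ShareNF P d M w M' w') {p : ℕ} (hp : p ∈ P) :
    p ∈ M.V w ↔ p ∈ M'.V w' := by
  obtain ⟨ψ, hψ, hw, hw'⟩ := h
  obtain ⟨S0, hS0, hnf0⟩ := exists_nf0_of_mem_NF hψ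
  rw [(sat_nf0_iff M w hS0).1 (hnf0 M w hw) p hp, (sat_nf0_iff M' w' hS0).1 (hnf0 M' w' hw') p hp]

lemma exists_rel (h : ShareNF P (d + 1) M w M' w') {v : M.W} (hv : M.R w v) :
    ∃ v', M'.R w' v' ∧ ShareNF P d M v M' v' := by
  obtain ⟨ψ, hψ, hw, hw'⟩ := h
  obtain ⟨S, hS, S0, -, rfl⟩ := mem_NF_succ.1 hψ
  obtain ⟨χ, hχ, hvχ⟩ := ((sat_nfSucc_iff M w S).1 hw).2.2 v hv
  obtain ⟨v', hv', hv'χ⟩ := ((sat_nfSucc_iff M' w' S).1 hw').2.1 χ hχ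
  exact ⟨v', hv', χ, hS hχ, hvχ, hv'χ⟩

lemma sat {χ : Form} (h : ShareNF P d M w M' w') (hP : χ.vars ⊆ P) (hd : χ.md ≤ d)
    (hw : M.sat w χ) : M'.sat w' χ := by
  induction χ generalizing d M M' w w' with
  | bot | top => exact hw
  | pos p => exact (h.mem_V_iff (hP (by simp [vars]))).1 hw
  | npos p => exact mt (h.mem_V_iff (hP (by simp [vars]))).2 hw
  | and a b iha ihb =>
    simp only [vars, Finset.union_subset_iff, md, max_le_iff] at hP hd
    exact ⟨iha h hP.1 hd.1 hw.1, ihb h hP.2 hd.2 hw.2⟩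
  | or a b iha ihb =>
    simp only [vars, Finset.union_subset_iff, md, max_le_iff] at hP hd
    exact hw.imp (iha h hP.1 hd.1) (ihb h hP.2 hd.2)
  | box a ih =>
    obtain ⟨d, rfl⟩ := Nat.exists_eq_add_of_lt (show 0 < d by simp only [md] at hd; omega)
    intro v' hv'
    obtain ⟨v, hv, hvv'⟩ := h.symm.exists_rel hv'
    exact ih hvv'.symm hP (by simp only [md] at hd; omega) (hw v hv)
  | dia a ih =>
    obtain ⟨d, rfl⟩ := Nat.exists_eq_add_of_lt (show 0 < d by simp only [md] at hd; omega)
    obtain ⟨v, hv, hva⟩ := hw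
    obtain ⟨v', hv', hvv'⟩ := h.exists_rel hv
    exact ⟨v', hv', ih hvv' hP (by simp only [md] at hd; omega) hva⟩

end ShareNF

section CharacteristicNF

open Classical

variable {P : Finset ℕ}

noncomputable def Model.charNF (M : Model) (P : Finset ℕ) : ℕ → M.W → Form
  | 0, w => nf0 P {p ∈ P | p ∈ M.V w}
  | d + 1, w => nfSucc P {p ∈ P | p ∈ M.V w}
      (haveI := M.finite; (Set.toFinite (M.charNF P d '' {v | M.R w v})).toFinset)

lemma Model.charNF_mem_NF (M : Model) (d : ℕ) (w : M.W) : M.charNF P d w ∈ NF P d := by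
  induction d generalizing w with
  | zero => exact mem_NF_zero.2 ⟨_, Finset.filter_subset _ _, rfl⟩
  | succ d ih =>
    refine mem_NF_succ.2 ⟨_, ?_, _, Finset.filter_subset _ _, rfl⟩
    rintro _ hχ
    simp only [Set.Finite.coe_toFinset] at hχ
    obtain ⟨v, -, rfl⟩ := hχ
    exact ih v

lemma Model.sat_charNF (M : Model) (d : ℕ) (w : M.W) : M.sat w (M.charNF P d w) := by
  have sat_nf0 (v : M.W) : M.sat v (nf0 P {p ∈ P | p ∈ M.V v}) :=
    (sat_nf0_iff M v (Finset.filter_subset _ _)).2 fun p hp => by simp [hp]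
  induction d generalizing w with
  | zero => exact sat_nf0 w
  | succ d ih =>
    refine (sat_nfSucc_iff M w _).2 ⟨sat_nf0 w, ?_, fun v hv => ⟨_, ?_, ih v⟩⟩
    · simp only [Set.Finite.mem_toFinset]
      rintro _ ⟨v, hv, rfl⟩
      exact ⟨v, hv, ih v⟩
    · simpa using ⟨v, hv, rfl⟩

end CharacteristicNF

section SubformulaModel

variable {P : Finset ℕ}

lemma pos_mem_conjuncts_nf0 {S0 : Finset ℕ} {p : ℕ} :
    pos p ∈ (nf0 P S0).conjuncts ↔ p ∈ S0 := by
  simp [nf0, conjuncts, conjuncts_bigAnd]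

lemma pos_mem_conjuncts_nfSucc {S0 : Finset ℕ} {S : Finset Form} {p : ℕ} :
    pos p ∈ (nfSucc P S0 S).conjuncts ↔ p ∈ S0 := by
  simp [nfSucc, nf0, conjuncts, conjuncts_bigAnd]

lemma dia_mem_conjuncts_nfSucc {S0 : Finset ℕ} {S : Finset Form} {χ : Form} :
    dia χ ∈ (nfSucc P S0 S).conjuncts ↔ χ ∈ S := by
  simp [nfSucc, nf0, conjuncts, conjuncts_bigAnd]

def Form.subfModel (ψ : Form) : Model where
  W := {χ // χ ∈ ψ.subf}
  nonempty := ⟨⟨ψ, mem_subf_self ψ⟩⟩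
  finite := inferInstance
  R x y := dia y.1 ∈ x.1.conjuncts
  V x := {p | pos p ∈ x.1.conjuncts}

lemma Form.subfModel_sat_self (ψ : Form) (d : ℕ) (x : ψ.subfModel.W) (hx : x.1 ∈ NF P d) :
    ψ.subfModel.sat x x.1 := by
  obtain ⟨x, hxψ⟩ := x
  induction d generalizing x with
  | zero =>
    obtain ⟨S0, hS0, rfl⟩ := mem_NF_zero.1 hx
    exact (sat_nf0_iff _ _ hS0).2 fun p _ => pos_mem_conjuncts_nf0
  | succ d ih =>
    obtain ⟨S, hS, S0, hS0, rfl⟩ := mem_NF_succ.1 hx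
    refine (sat_nfSucc_iff _ _ S).2 ⟨(sat_nf0_iff _ _ hS0).2 fun p _ => pos_mem_conjuncts_nfSucc,
      fun χ hχ => ?_, fun v hv => ⟨v.1, dia_mem_conjuncts_nfSucc.1 hv, ?_⟩⟩
    · have hdia : dia χ ∈ (nfSucc P S0 S).conjuncts := dia_mem_conjuncts_nfSucc.2 hχ
      have hχψ : χ ∈ ψ.subf := subf_subset_of_mem hxψ <| subf_subset_of_mem
        (conjuncts_subset_subf _ hdia) (by simp [subf, mem_subf_self])
      exact ⟨⟨χ, hχψ⟩, hdia, ih _ hχψ (hS hχ)⟩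
    · exact ih _ v.2 (hS (dia_mem_conjuncts_nfSucc.1 hv))

lemma satisfiable_of_mem_NF {ψ : Form} {d : ℕ} (hψ : ψ ∈ NF P d) : Satisfiable Logic.K ψ :=
  ⟨ψ.subfModel, Model.isFor_K _, ⟨ψ, mem_subf_self ψ⟩, ψ.subfModel_sat_self d _ hψ⟩

end SubformulaModel

lemma valid_imp_or_valid_imp_neg_of_mem_NF (l : Logic) {P : Finset ℕ} {d : ℕ} {ψ χ : Form}
    (hψ : ψ ∈ NF P d) (hP : χ.vars ⊆ P) (hd : χ.md ≤ d) :
    Valid l (ψ.imp χ) ∨ Valid l (ψ.imp χ.neg) := by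
  obtain ⟨M₀, -, w₀, hw₀⟩ := satisfiable_of_mem_NF hψ
  have share (M : Model) (w : M.W) (hw : M.sat w ψ) : ShareNF P d M₀ w₀ M w :=
    ⟨ψ, hψ, hw₀, hw⟩
  by_cases hχ : M₀.sat w₀ χ
  · exact .inl <| valid_imp_iff.2 fun M _ w hw => (share M w hw).sat hP hd hχ
  · exact .inr <| valid_imp_iff.2 fun M _ w hw =>
      (sat_neg M χ w).2 fun h => hχ ((share M w hw).symm.sat hP hd h)

/-- φ is satisfiable and complete up to its depth for K iff it
is K-equivalent to a normal form in F_{P(φ)}^{md(φ)}. -/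
theorem stmt18 (φ : Form) :
    (Satisfiable Logic.K φ ∧ CompleteUpToDepth Logic.K φ) ↔
    ∃ ψ ∈ NF φ.vars φ.md, Valid Logic.K (φ.biimp ψ) := by
  constructor
  · rintro ⟨⟨M, -, w, hw⟩, hcomplete⟩
    set ψ := M.charNF φ.vars φ.md w
    have hψ : ψ ∈ NF φ.vars φ.md := M.charNF_mem_NF _ _
    have hwψ : M.sat w ψ := M.sat_charNF _ _
    have hφψ : Valid Logic.K (φ.imp ψ) :=
      (hcomplete ψ (vars_subset_of_mem_NF hψ) (md_le_of_mem_NF hψ)).resolve_right fun h =>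
        (sat_neg M ψ w).1 (valid_imp_iff.1 h M M.isFor_K w hw) hwψ
    refine ⟨ψ, hψ, valid_biimp_iff.2 fun M' hM' w' =>
      ⟨valid_imp_iff.1 hφψ M' hM' w', fun hw'ψ => ?_⟩⟩
    exact ShareNF.sat ⟨ψ, hψ, hwψ, hw'ψ⟩ subset_rfl le_rfl hw
  · rintro ⟨ψ, hψ, hφψ⟩
    rw [valid_biimp_iff] at hφψ
    obtain ⟨M, hM, w, hwψ⟩ := satisfiable_of_mem_NF hψ
    refine ⟨⟨M, hM, w, (hφψ M hM w).2 hwψ⟩, fun χ hP hd => ?_⟩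
    simpa +contextual only [valid_imp_iff, hφψ] using
      valid_imp_or_valid_imp_neg_of_mem_NF Logic.K hψ hP hd
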